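/- arXiv:1410.5007 — 4 statements merged into one kernel-verified Lean document; each statement's English description precedes it below -/
import Mathlib

section
/- Let H be a bialgebra over a commutative ring A that is cocommutative. Then the Hopf k-th power map Ψ^k : H → H is a coalgebra homomorphism. -/
open TensorProduct

set_option synthInstance.maxHeartbeats 1000000
set_option maxHeartbeats 1000000

section Aux

variable {A H : Type*} [CommRing A] [Ring H] [Bialgebra A H]

open Coalgebra LinearMap

local notation "Δ" => (Coalgebra.comul : H →ₗ[A] H ⊗[A] H)
local notation "ε" => (Coalgebra.counit : H →ₗ[A] A)
local notation "m" => LinearMap.mul' A H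

/-- elementwise multiplication on `H ⊗ H` via map/ttc -/
lemma aux_mul_eq (x y : H ⊗[A] H) :
    x * y = TensorProduct.map m m
      (TensorProduct.tensorTensorTensorComm A H H H H (x ⊗ₜ y)) := by
  induction x using TensorProduct.induction_on with
  | zero => simp [zero_mul]
  | tmul a b =>
    induction y using TensorProduct.induction_on with
    | zero => simp [mul_zero]
    | tmul c d => simp [Algebra.TensorProduct.tmul_mul_tmul, mul'_apply]
    | add u v hu hv => simp [mul_add, tmul_add, hu, hv]
  | add u v hu hv => simp [add_mul, add_tmul, hu, hv]

lemma aux_counit_comp_mul :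
    ε ∘ₗ m = LinearMap.mul' A A ∘ₗ TensorProduct.map ε ε := by
  apply TensorProduct.ext'
  intro a b
  simp [mul'_apply]

lemma aux_comul_comp_mul :
    Δ ∘ₗ m = TensorProduct.map m m ∘ₗ
      (TensorProduct.tensorTensorTensorComm A H H H H).toLinearMap ∘ₗ
        TensorProduct.map Δ Δ := by
  apply TensorProduct.ext'
  intro a b
  simp only [LinearMap.comp_apply, mul'_apply, Bialgebra.comul_mul,
    TensorProduct.map_tmul, LinearEquiv.coe_coe]
  exact aux_mul_eq _ _

lemma aux_counit_collapse :
    LinearMap.mul' A A ∘ₗ TensorProduct.map ε ε ∘ₗ Δ = ε := by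
  have h1 : TensorProduct.map ε ε = (ε).lTensor A ∘ₗ (ε).rTensor H := by
    apply TensorProduct.ext'; intro a b; simp
  rw [h1, LinearMap.comp_assoc, Coalgebra.rTensor_counit_comp_comul]
  ext h
  simp [mul'_apply]

/-- key: cocommutativity implies `Δ⁴` is invariant under the middle swap `ttc`. -/
lemma aux_key (hcocomm : (TensorProduct.comm A H H).toLinearMap ∘ₗ Δ = Δ) :
    (TensorProduct.tensorTensorTensorComm A H H H H).toLinearMap ∘ₗ
        TensorProduct.map Δ Δ ∘ₗ Δ = TensorProduct.map Δ Δ ∘ₗ Δ := by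
  classical
  set τ := (TensorProduct.comm A H H).toLinearMap
  -- structural isos
  set C : (H ⊗[A] (H ⊗[A] H)) ⊗[A] H →ₗ[A] (H ⊗[A] H) ⊗[A] (H ⊗[A] H) :=
    (TensorProduct.assoc A (H ⊗[A] H) H H).toLinearMap ∘ₗ
      ((TensorProduct.assoc A H H H).symm.toLinearMap).rTensor H with hC
  set P : (H ⊗[A] H) ⊗[A] H →ₗ[A] (H ⊗[A] (H ⊗[A] H)) ⊗[A] H :=
    ((Δ).lTensor H).rTensor H with hP
  have hfact : TensorProduct.map Δ Δ ∘ₗ Δ = C ∘ₗ P ∘ₗ (Δ).rTensor H ∘ₗ Δ := by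
    have e1 : TensorProduct.map Δ Δ ∘ₗ Δ =
        (Δ).rTensor (H ⊗[A] H) ∘ₗ ((Δ).lTensor H ∘ₗ Δ) := by
      rw [← LinearMap.rTensor_comp_lTensor, LinearMap.comp_assoc]
    have e2 : (Δ).lTensor H ∘ₗ Δ =
        (TensorProduct.assoc A H H H).toLinearMap ∘ₗ ((Δ).rTensor H ∘ₗ Δ) := by
      exact Coalgebra.coassoc.symm
    have e3 : (Δ).rTensor (H ⊗[A] H) ∘ₗ (TensorProduct.assoc A H H H).toLinearMap =
        (TensorProduct.assoc A (H ⊗[A] H) H H).toLinearMap ∘ₗ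
          ((Δ).rTensor H).rTensor H := by
      have := TensorProduct.map_map_comp_assoc_eq (R := A) Δ
        (LinearMap.id (M := H)) (LinearMap.id (M := H))
      simpa [LinearMap.rTensor, TensorProduct.map_id] using this
    have e4 : ((Δ).rTensor H).rTensor H ∘ₗ ((Δ).rTensor H ∘ₗ Δ) =
        ((TensorProduct.assoc A H H H).symm.toLinearMap).rTensor H ∘ₗ P ∘ₗ
          (Δ).rTensor H ∘ₗ Δ := by
      rw [← LinearMap.comp_assoc, ← LinearMap.rTensor_comp]
      conv_lhs => rw [← Coalgebra.coassoc_symm]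
      rw [LinearMap.rTensor_comp, LinearMap.rTensor_comp, hP]
      simp only [LinearMap.comp_assoc]
    rw [e1, e2, ← LinearMap.comp_assoc, e3, LinearMap.comp_assoc, e4, hC]
    simp only [LinearMap.comp_assoc]
  have hTC : (TensorProduct.tensorTensorTensorComm A H H H H).toLinearMap ∘ₗ C =
      C ∘ₗ ((τ).lTensor H).rTensor H := by
    apply TensorProduct.ext'
    intro x d
    induction x using TensorProduct.induction_on with
    | zero => rw [zero_tmul, LinearMap.map_zero, LinearMap.map_zero]
    | tmul a y =>
      induction y using TensorProduct.induction_on with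
      | zero => simp
      | tmul b c => simp [hC, τ]
      | add u v hu hv => simp_all [tmul_add, add_tmul]
    | add u v hu hv => simp_all [add_tmul]
  have hτP : ((τ).lTensor H).rTensor H ∘ₗ P = P := by
    rw [hP, ← LinearMap.rTensor_comp, ← LinearMap.lTensor_comp, hcocomm]
  rw [hfact, ← LinearMap.comp_assoc, hTC, LinearMap.comp_assoc]
  congr 1
  rw [← LinearMap.comp_assoc, hτP]

lemma aux_ttc_nat (f : H →ₗ[A] H) :
    (TensorProduct.tensorTensorTensorComm A H H H H).toLinearMap ∘ₗ
        TensorProduct.map (TensorProduct.map f f)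
          (LinearMap.id : H ⊗[A] H →ₗ[A] H ⊗[A] H) =
      TensorProduct.map (TensorProduct.map f LinearMap.id)
          (TensorProduct.map f LinearMap.id) ∘ₗ
        (TensorProduct.tensorTensorTensorComm A H H H H).toLinearMap := by
  apply TensorProduct.ext'
  intro x y
  induction x using TensorProduct.induction_on with
  | zero => rw [zero_tmul, LinearMap.map_zero, LinearMap.map_zero]
  | tmul a b =>
    induction y using TensorProduct.induction_on with
    | zero => rw [tmul_zero, LinearMap.map_zero, LinearMap.map_zero]
    | tmul c d => simp
    | add u v hu hv => simp_all [tmul_add]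
  | add u v hu hv => simp_all [add_tmul]

end Aux

/-- The Hopf `k`-th power map `Ψ^k := μ^(k) ∘ μ*(k)` of a bialgebra, defined recursively
(equivalently, the `k`-th convolution power of the identity), with the conventions
`Ψ^0 = e ∘ e*` (unit composed with counit) and `Ψ^1 = id`. -/
noncomputable def hopfPower (A H : Type*) [CommRing A] [Ring H]
    [Bialgebra A H] : ℕ → (H →ₗ[A] H)
  | 0 => (Algebra.linearMap A H) ∘ₗ (Coalgebra.counit : H →ₗ[A] A)
  | (k + 1) =>
      (LinearMap.mul' A H) ∘ₗ (LinearMap.rTensor H (hopfPower A H k)) ∘ₗ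
        (Coalgebra.comul : H →ₗ[A] H ⊗[A] H)

/-- If the bialgebra `H` is cocommutative, then the Hopf `k`-th power
map `Ψ^k : H → H` is a coalgebra homomorphism: it commutes with the counit and with the
comultiplication. -/
theorem hopfPower_coalgHom (A H : Type*) [CommRing A] [Ring H] [Bialgebra A H]
    (hcocomm : (TensorProduct.comm A H H).toLinearMap ∘ₗ
        (Coalgebra.comul : H →ₗ[A] H ⊗[A] H) = Coalgebra.comul)
    (k : ℕ) :
    (Coalgebra.counit : H →ₗ[A] A) ∘ₗ hopfPower A H k = Coalgebra.counit ∧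
      (Coalgebra.comul : H →ₗ[A] H ⊗[A] H) ∘ₗ hopfPower A H k =
        TensorProduct.map (hopfPower A H k) (hopfPower A H k) ∘ₗ Coalgebra.comul := by
  induction k with
  | zero =>
    constructor
    · ext h
      simp [hopfPower]
    · have h1 : TensorProduct.map (Coalgebra.counit : H →ₗ[A] A)
          (Coalgebra.counit : H →ₗ[A] A) ∘ₗ Coalgebra.comul =
          (Coalgebra.counit : H →ₗ[A] A).lTensor A ∘ₗ TensorProduct.mk A A H 1 := by
        rw [← LinearMap.lTensor_comp_rTensor, LinearMap.comp_assoc,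
          Coalgebra.rTensor_counit_comp_comul]
      rw [hopfPower, TensorProduct.map_comp, LinearMap.comp_assoc, h1]
      ext h
      simp [Algebra.algebraMap_eq_smul_one, smul_tmul,
        Algebra.TensorProduct.one_def]
  | succ k ih =>
    obtain ⟨ih1, ih2⟩ := ih
    set Ψ := hopfPower A H k with hΨ
    have hunfold : hopfPower A H (k + 1) = LinearMap.mul' A H ∘ₗ
        TensorProduct.map Ψ LinearMap.id ∘ₗ (Coalgebra.comul : H →ₗ[A] H ⊗[A] H) := rfl
    have hswap : TensorProduct.map (Coalgebra.comul : H →ₗ[A] H ⊗[A] H) Coalgebra.comul ∘ₗ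
        TensorProduct.map Ψ LinearMap.id =
        TensorProduct.map (TensorProduct.map Ψ Ψ)
            (LinearMap.id : H ⊗[A] H →ₗ[A] H ⊗[A] H) ∘ₗ
          TensorProduct.map Coalgebra.comul Coalgebra.comul := by
      rw [← TensorProduct.map_comp, ← TensorProduct.map_comp, ih2,
        LinearMap.comp_id, LinearMap.id_comp]
    constructor
    · rw [hunfold]
      simp only [← LinearMap.comp_assoc]
      rw [aux_counit_comp_mul]
      have hc : TensorProduct.map (Coalgebra.counit : H →ₗ[A] A) Coalgebra.counit ∘ₗ
          TensorProduct.map Ψ (LinearMap.id : H →ₗ[A] H) =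
          TensorProduct.map (Coalgebra.counit : H →ₗ[A] A) Coalgebra.counit := by
        rw [← TensorProduct.map_comp, ih1, LinearMap.comp_id]
      rw [LinearMap.comp_assoc (TensorProduct.map Ψ LinearMap.id), hc,
        LinearMap.comp_assoc]
      exact aux_counit_collapse
    · rw [hunfold]
      simp only [← LinearMap.comp_assoc]
      rw [aux_comul_comp_mul]
      simp only [← LinearMap.comp_assoc]
      rw [LinearMap.comp_assoc (TensorProduct.map Ψ LinearMap.id)
        (TensorProduct.map (Coalgebra.comul : H →ₗ[A] H ⊗[A] H) Coalgebra.comul), hswap]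
      simp only [← LinearMap.comp_assoc]
      rw [LinearMap.comp_assoc
        (TensorProduct.map (TensorProduct.map Ψ Ψ)
          (LinearMap.id : H ⊗[A] H →ₗ[A] H ⊗[A] H))
        (TensorProduct.tensorTensorTensorComm A H H H H).toLinearMap, aux_ttc_nat]
      simp only [LinearMap.comp_assoc]
      rw [aux_key hcocomm]
      simp only [← LinearMap.comp_assoc]
      rw [← TensorProduct.map_comp, ← TensorProduct.map_comp]
end

section
/- Let H be a commutative and cocommutative bialgebra over a commutative ring A. Then for all integers k, l ≥ 0, μ ∘ (Ψ^k ⊗ Ψ^l) ∘ μ* = Ψ^{k+l}, i.e., for every h ∈ H (in Sweedler notation) Ψ^k(h_(1)) · Ψ^l(h_(2)) = Ψ^{k+l}(h). -/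
open TensorProduct

open WithConv

theorem toConv_hopfPower (A H : Type*) [CommRing A] [Ring H] [Bialgebra A H] (k : ℕ) :
    toConv (hopfPower A H k) = toConv (LinearMap.id : H →ₗ[A] H) ^ k := by
  induction k with
  | zero => rfl
  | succ k ih => rw [pow_succ, ← ih]; rfl

theorem hopfPower_mul_comul_general (A H : Type*) [CommRing A] [CommRing H] [Bialgebra A H]
    (k l : ℕ) :
    (LinearMap.mul' A H) ∘ₗ (TensorProduct.map (hopfPower A H k) (hopfPower A H l)) ∘ₗ
        (Coalgebra.comul : H →ₗ[A] H ⊗[A] H) = hopfPower A H (k + l) := by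
  have h : toConv (hopfPower A H k) * toConv (hopfPower A H l) =
      toConv (hopfPower A H (k + l)) := by
    rw [toConv_hopfPower, toConv_hopfPower, toConv_hopfPower, pow_add]
  -- the left-hand side is definitionally `ofConv` of that convolution product
  exact congrArg ofConv h

/-- If the bialgebra `H` is commutative and cocommutative, then for all
`k, l ≥ 0` one has `μ ∘ (Ψ^k ⊗ Ψ^l) ∘ μ* = Ψ^(k+l)`, i.e. in Sweedler notation
`Ψ^k(h₍₁₎) * Ψ^l(h₍₂₎) = Ψ^(k+l)(h)` for every `h ∈ H`. -/
theorem hopfPower_mul_comul (A H : Type*) [CommRing A] [CommRing H] [Bialgebra A H]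
    (hcocomm : (TensorProduct.comm A H H).toLinearMap ∘ₗ
        (Coalgebra.comul : H →ₗ[A] H ⊗[A] H) = Coalgebra.comul)
    (k l : ℕ) :
    (LinearMap.mul' A H) ∘ₗ (TensorProduct.map (hopfPower A H k) (hopfPower A H l)) ∘ₗ
        (Coalgebra.comul : H →ₗ[A] H ⊗[A] H) = hopfPower A H (k + l) :=
  hopfPower_mul_comul_general A H k l
end

section
/- Let G be a finite group and H ⊴ G a normal subgroup such that every inner automorphism of G restricts to an inner automorphism of H. Let M = (m_{πρ}) be the |Irr(H)| × |Irr(G)| matrix with entries m_{πρ} = ⟨π, Res^G_H ρ⟩, the multiplicity of the irreducible H-representation π in the restriction of the irreducible G-representation ρ. Then M M^T = [G : H] · I, where I is the identity matrix of size |Irr(H)|. Equivalently, for all π, π' ∈ Irr(H): Σ_{ρ ∈ Irr(G)} ⟨π, Res ρ⟩⟨π', Res ρ⟩ = [G:H] if π ≅ π' and 0 otherwise. -/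
/-!
Extend the character of `π'` by zero to a function `D` on `G`. The hypothesis on inner
automorphisms makes `D` a class function on `G`, so it expands in the irreducible characters of
`G` as `D = ∑ᵢ ⟨D, χᵢ⟩ χᵢ`, where `⟨D, χᵢ⟩ = [G : H]⁻¹ ⟨π', Res ρᵢ⟩`. Pairing this expansion with
the character of `π` on `H` gives `∑ᵢ ⟨π, Res ρᵢ⟩ ⟨π', Res ρᵢ⟩ = [G : H] ⟨π, π'⟩`, and the
orthogonality of irreducible characters of `H` finishes the proof.

The expansion rests on the completeness of irreducible characters among class functions: if a
class function `u` is orthogonal to all of them, the central element `∑ u(g⁻¹) g` of `ℂ[G]` acts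
with trace zero, hence (Schur) as zero, on every simple submodule of the semisimple module
`ℂ[G]`, so it is zero.
-/

open CategoryTheory
open scoped Classical

/-- The multiplicity `⟨π, Res^G_H ρ⟩` of an irreducible `H`-representation `π` in the
restriction to `H` of a `G`-representation `ρ`, computed as the inner product of
characters `(1/|H|) ∑_{h ∈ H} χ_π(h) χ_ρ(h⁻¹)`. -/
noncomputable def resMultiplicity {G : Type} [Group G] (H : Subgroup G) [Fintype H]
    (π : FDRep ℂ ↥H) (ρ : FDRep ℂ G) : ℂ :=
  (Fintype.card H : ℂ)⁻¹ * ∑ h : H, π.character h * ρ.character ((h⁻¹ : H) : G)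

section SimpleModule

variable {A M : Type*} [Ring A] [AddCommGroup M] [Module A M]

def centralSMulEnd (a : A) (ha : ∀ b, Commute a b) : Module.End A M where
  toFun m := a • m
  map_add' := smul_add a
  map_smul' b m := by simp only [smul_smul, (ha b).eq, RingHom.id_apply]

theorem LinearMap.eq_zero_of_forall_isSimpleModule_le_ker [IsSemisimpleModule A M]
    {N : Type*} [AddCommGroup N] [Module A N] (f : M →ₗ[A] N)
    (h : ∀ S : Submodule A M, IsSimpleModule A S → S ≤ LinearMap.ker f) : f = 0 := by
  rw [← LinearMap.ker_eq_top, eq_top_iff, ← IsSemisimpleModule.sSup_simples_eq_top A M]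
  exact sSup_le h

theorem IsSimpleModule.smul_eq_zero_of_trace_eq_zero (k : Type*) [Field k] [CharZero k]
    [IsAlgClosed k] [Algebra k A] [Module k M] [IsScalarTower k A M] [FiniteDimensional k M]
    [IsSimpleModule A M] (a : A) (ha : ∀ b, Commute a b)
    (htr : LinearMap.trace k M (Algebra.lsmul k k M a) = 0) (m : M) : a • m = 0 := by
  obtain ⟨c, hc⟩ := (IsSimpleModule.algebraMap_end_bijective_of_isAlgClosed k (A := A) (V := M)).2
    (centralSMulEnd a ha)
  have hsmul : ∀ m : M, a • m = c • m := fun m => (LinearMap.congr_fun hc m).symm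
  have hlsmul : Algebra.lsmul k k M a = c • LinearMap.id := LinearMap.ext hsmul
  have : Nontrivial M := IsSimpleModule.nontrivial A M
  have hc0 : c = 0 := by
    rw [hlsmul, map_smul, LinearMap.trace_id, smul_eq_mul, mul_eq_zero] at htr
    exact htr.resolve_right (Nat.cast_ne_zero.2 Module.finrank_pos.ne')
  rw [hsmul, hc0, zero_smul]

end SimpleModule

universe u

theorem FDRep.simple_of_isSimpleModule {k G : Type u} [Field k] [IsAlgClosed k] [Group G]
    [Finite G] [NeZero (Nat.card G : k)] (M : Type u) [AddCommGroup M] [Module k M]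
    [Module (MonoidAlgebra k G) M] [IsScalarTower k (MonoidAlgebra k G) M] [FiniteDimensional k M]
    [IsSimpleModule (MonoidAlgebra k G) M] :
    Simple (FDRep.of (Representation.ofModule' (k := k) (G := G) M)) := by
  set V := FDRep.of (Representation.ofModule' (k := k) (G := G) M)
  have : Nontrivial M := IsSimpleModule.nontrivial (MonoidAlgebra k G) M
  have hid : 𝟙 V ≠ 0 := fun h => by
    obtain ⟨m, hm⟩ := exists_ne (0 : M)
    exact hm congr(($h).hom.hom.hom m)
  rw [FDRep.simple_iff_end_is_rank_one, finrank_eq_one_iff_of_nonzero' _ hid]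
  intro f
  obtain ⟨c, hc⟩ := (IsSimpleModule.algebraMap_end_bijective_of_isAlgClosed k
    (A := MonoidAlgebra k G) (V := M)).2
    (MonoidAlgebra.equivariantOfLinearOfComm f.hom.hom.hom fun g m => congr($(f.comm g).hom.hom m))
  refine ⟨c, Action.hom_ext _ _ (FGModuleCat.hom_ext (LinearMap.ext fun m => ?_))⟩
  exact LinearMap.congr_fun hc m

section ClassFunction

variable {G : Type*} [Group G]

def IsClassFunction {R : Type*} (f : G → R) : Prop := ∀ x g : G, f (x * g * x⁻¹) = f g

theorem IsClassFunction.comp_inv {R : Type*} {f : G → R} (hf : IsClassFunction f) :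
    IsClassFunction fun g => f g⁻¹ := fun x g => by
  simpa [mul_assoc] using hf x g⁻¹

theorem IsClassFunction.extend_subtype_val {R : Type*} [Zero R] {H : Subgroup G} {f : H → R}
    (hf : IsClassFunction f) (hinner : ∀ g : G, ∃ h ∈ H, ∀ x ∈ H, g * x * g⁻¹ = h * x * h⁻¹) :
    IsClassFunction (Function.extend ((↑) : H → G) f 0) := by
  intro x g
  obtain ⟨h, hh, hconj⟩ := hinner x
  by_cases hg : g ∈ H
  · have hxg : x * g * x⁻¹ = ((⟨h, hh⟩ * ⟨g, hg⟩ * ⟨h, hh⟩⁻¹ : H) : G) := hconj g hg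
    rw [hxg, Subtype.val_injective.extend_apply, hf]
    exact (Subtype.val_injective.extend_apply f 0 ⟨g, hg⟩).symm
  · have hnormal : H.Normal := ⟨fun n hn y => by
      obtain ⟨h', hh', hconj'⟩ := hinner y
      rw [hconj' n hn]
      exact H.mul_mem (H.mul_mem hh' hn) (H.inv_mem hh')⟩
    have hxg : x * g * x⁻¹ ∉ H := fun hxg => hg (by
      simpa using (hnormal.mem_comm_iff (a := x) (b := g * x⁻¹)).mp (by rwa [← mul_assoc]))
    rw [Function.extend_apply' _ _ _ (by simpa using hxg),
      Function.extend_apply' _ _ _ (by simpa using hg), Pi.zero_apply, Pi.zero_apply]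

end ClassFunction

namespace MonoidAlgebra

variable {k G : Type*} [Fintype G]

noncomputable def ofFun [Semiring k] (u : G → k) : MonoidAlgebra k G := ∑ g, single g (u g)

theorem coeff_ofFun [Semiring k] (u : G → k) (x : G) : (ofFun u).coeff x = u x := by
  simp [ofFun, coeff_sum, Finsupp.single_apply]

theorem commute_ofFun [CommSemiring k] [Group G] {u : G → k} (hu : IsClassFunction u)
    (b : MonoidAlgebra k G) : Commute (ofFun u) b := by
  induction b using MonoidAlgebra.induction_on with
  | of x =>
    simp only [Commute, SemiconjBy, ofFun, of_apply, Finset.sum_mul, Finset.mul_sum,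
      single_mul_single, mul_one, one_mul]
    refine Fintype.sum_equiv (MulAut.conj x⁻¹).toEquiv _ _ fun g => ?_
    simpa [mul_assoc] using (hu x⁻¹ g).symm
  | add b c hb hc => exact hb.add_right hc
  | smul r b hb => exact hb.smul_right r

end MonoidAlgebra

section ClassInner

variable {G : Type*} [Group G] [Fintype G]

noncomputable def classInner (f f' : G → ℂ) : ℂ :=
  (Fintype.card G : ℂ)⁻¹ * ∑ g, f g * f' g⁻¹

theorem classInner_sum_mul_right {ι : Type*} [Fintype ι] (f : G → ℂ) (c : ι → ℂ)
    (χ : ι → G → ℂ) :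
    classInner f (fun g => ∑ i, c i * χ i g) = ∑ i, c i * classInner f (χ i) := by
  simp only [classInner, Finset.mul_sum]
  rw [Finset.sum_comm]
  exact Finset.sum_congr rfl fun _ _ => Finset.sum_congr rfl fun _ _ => by ring

theorem classInner_sub_sum_mul_left {ι : Type*} [Fintype ι] (f f' : G → ℂ) (c : ι → ℂ)
    (χ : ι → G → ℂ) :
    classInner (fun g => f g - ∑ i, c i * χ i g) f' =
      classInner f f' - ∑ i, c i * classInner (χ i) f' := by
  simp only [classInner, sub_mul, Finset.sum_sub_distrib, Finset.sum_mul, Finset.mul_sum, mul_sub]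
  rw [Finset.sum_comm (f := fun g i => _)]
  congr 1
  exact Finset.sum_congr rfl fun _ _ => Finset.sum_congr rfl fun _ _ => by ring

theorem classInner_extend_subtype_val (H : Subgroup G) [Fintype H] (f : H → ℂ) (χ : G → ℂ) :
    classInner (Function.extend ((↑) : H → G) f 0) χ =
      (H.index : ℂ)⁻¹ * classInner f fun h => χ h := by
  have hcard : (Fintype.card G : ℂ) = H.index * Fintype.card H := by
    rw [← Nat.card_eq_fintype_card, ← Nat.card_eq_fintype_card, ← H.index_mul_card]
    push_cast
    ring
  have hsum : ∑ g : G, Function.extend ((↑) : H → G) f 0 g * χ g⁻¹ = ∑ h : H, f h * χ ↑h⁻¹ :=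
    (Fintype.sum_of_injective _ Subtype.val_injective _ _
      (fun g hg => by rw [Function.extend_apply' _ _ _ hg, Pi.zero_apply, zero_mul])
      (fun h => by rw [Subtype.val_injective.extend_apply]; rfl)).symm
  rw [classInner, classInner, hsum, hcard, mul_inv, mul_assoc]

theorem FDRep.classInner_character (V W : FDRep ℂ G) [Simple V] [Simple W] :
    classInner V.character W.character = if Nonempty (V ≅ W) then 1 else 0 := by
  have : Invertible (Nat.card G : ℂ) := invertibleOfNonzero (Nat.cast_ne_zero.2 Nat.card_pos.ne')
  rw [← FDRep.char_orthonormal V W, classInner, Nat.card_eq_fintype_card]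

end ClassInner

theorem resMultiplicity_eq_classInner {G : Type} [Group G] (H : Subgroup G) [Fintype H]
    (π : FDRep ℂ H) (V : FDRep ℂ G) :
    resMultiplicity H π V = classInner π.character fun h => V.character h :=
  rfl

section Completeness

variable {G : Type} [Group G] {ι : Type*} (ρ : ι → FDRep ℂ G)

theorem nonempty_iso_iff_eq [∀ i, Simple (ρ i)]
    (hcomplete : ∀ V : FDRep ℂ G, Simple V → ∃! i, Nonempty (V ≅ ρ i)) (i j : ι) :
    Nonempty (ρ i ≅ ρ j) ↔ i = j := by
  refine ⟨fun h => ?_, fun h => h ▸ ⟨Iso.refl _⟩⟩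
  obtain ⟨k, _, huniq⟩ := hcomplete (ρ i) inferInstance
  exact (huniq i ⟨Iso.refl _⟩).trans (huniq j h).symm

variable [Fintype G]

open MonoidAlgebra in
theorem IsClassFunction.eq_zero_of_forall_classInner_character_eq_zero
    (hcomplete : ∀ V : FDRep ℂ G, Simple V → ∃ i, Nonempty (V ≅ ρ i))
    {u : G → ℂ} (hu : IsClassFunction u) (horth : ∀ i, classInner u (ρ i).character = 0) :
    u = 0 := by
  set a : MonoidAlgebra ℂ G := ofFun fun g => u g⁻¹
  have ha : ∀ b, Commute a b := commute_ofFun hu.comp_inv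
  have hsimple (S : Submodule (MonoidAlgebra ℂ G) (MonoidAlgebra ℂ G))
      [IsSimpleModule (MonoidAlgebra ℂ G) S] : S ≤ LinearMap.ker (centralSMulEnd a ha) := by
    intro s hs
    obtain ⟨i, ⟨e⟩⟩ := hcomplete _ (FDRep.simple_of_isSimpleModule (k := ℂ) (G := G) S)
    have htr : LinearMap.trace ℂ S (Algebra.lsmul ℂ ℂ S a) = 0 := by
      have hsum : ∑ g, u g⁻¹ * (ρ i).character g = 0 := by
        have := horth i
        rw [classInner, mul_eq_zero, inv_eq_zero, Nat.cast_eq_zero] at this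
        rw [← this.resolve_left Fintype.card_ne_zero]
        exact Fintype.sum_equiv (Equiv.inv G) _ _ fun g => by simp
      rw [← hsum, ← FDRep.char_iso e]
      simp only [a, ofFun, map_sum, FDRep.character]
      refine Finset.sum_congr rfl fun g _ => ?_
      rw [← mul_one (u g⁻¹), ← smul_single', map_smul, map_smul, smul_eq_mul, mul_one]
      rfl
    exact congr(Subtype.val $(IsSimpleModule.smul_eq_zero_of_trace_eq_zero ℂ _ ha htr ⟨s, hs⟩))
  have h := LinearMap.congr_fun (LinearMap.eq_zero_of_forall_isSimpleModule_le_ker _ hsimple) 1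
  funext x
  simpa [a, centralSMulEnd, coeff_ofFun] using congr(coeff $h x⁻¹)

variable [∀ i, Simple (ρ i)]

theorem IsClassFunction.eq_sum_classInner_mul_character [Fintype ι]
    (hcomplete : ∀ V : FDRep ℂ G, Simple V → ∃! i, Nonempty (V ≅ ρ i))
    {f : G → ℂ} (hf : IsClassFunction f) :
    f = fun g => ∑ i, classInner f (ρ i).character * (ρ i).character g := by
  set c := fun i => classInner f (ρ i).character
  have hw : IsClassFunction fun g => f g - ∑ i, c i * (ρ i).character g := fun x g => by
    simp only [hf x g, FDRep.char_conj]
  have horth : ∀ j, classInner (fun g => f g - ∑ i, c i * (ρ i).character g) (ρ j).character = 0 :=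
    fun j => by
      simp only [classInner_sub_sum_mul_left, FDRep.classInner_character,
        nonempty_iso_iff_eq ρ hcomplete, mul_ite, mul_one, mul_zero, Finset.sum_ite_eq',
        Finset.mem_univ, if_true, c, sub_self]
  funext g
  exact sub_eq_zero.mp
    (congrFun (hw.eq_zero_of_forall_classInner_character_eq_zero ρ
      (fun V hV => (hcomplete V hV).exists) horth) g)

end Completeness

theorem resMultiplicity_orthogonality_general {G : Type} [Group G] [Fintype G]
    (H : Subgroup G) [Fintype H]
    (hinner : ∀ g : G, ∃ h ∈ H, ∀ x ∈ H, g * x * g⁻¹ = h * x * h⁻¹)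
    {ι : Type} [Fintype ι] (ρ : ι → FDRep ℂ G) [∀ i, Simple (ρ i)]
    (hcomplete : ∀ V : FDRep ℂ G, Simple V → ∃! i : ι, Nonempty (V ≅ ρ i))
    (π π' : FDRep ℂ ↥H) [Simple π] [Simple π'] :
    ∑ i : ι, resMultiplicity H π (ρ i) * resMultiplicity H π' (ρ i) =
      if Nonempty (π ≅ π') then (H.index : ℂ) else 0 := by
  set D := Function.extend ((↑) : H → G) π'.character 0
  have hD : IsClassFunction D :=
    IsClassFunction.extend_subtype_val (fun x h => π'.char_conj h x) hinner
  have hindex : (H.index : ℂ) ≠ 0 := Nat.cast_ne_zero.2 Subgroup.index_ne_zero_of_finite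
  have hmult (i : ι) : resMultiplicity H π' (ρ i) = H.index * classInner D (ρ i).character := by
    rw [classInner_extend_subtype_val, mul_inv_cancel_left₀ hindex, resMultiplicity_eq_classInner]
  calc ∑ i, resMultiplicity H π (ρ i) * resMultiplicity H π' (ρ i)
      = H.index * classInner π.character fun h : H =>
          ∑ i, classInner D (ρ i).character * (ρ i).character h := by
        rw [classInner_sum_mul_right, Finset.mul_sum]
        refine Finset.sum_congr rfl fun i _ => ?_
        rw [hmult, resMultiplicity_eq_classInner]
        ring
    _ = H.index * classInner π.character π'.character := by
        congr 2
        funext h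
        rw [← congrFun (hD.eq_sum_classInner_mul_character ρ hcomplete) h]
        exact Subtype.val_injective.extend_apply _ _ h
    _ = if Nonempty (π ≅ π') then (H.index : ℂ) else 0 := by
        rw [FDRep.classInner_character]
        split_ifs <;> simp

/-- Let `G` be a finite group and `H ⊴ G` a normal subgroup such that
every inner automorphism of `G` restricts to an inner automorphism of `H`.  Let
`M = (m_{πρ})` be the `|Irr(H)| × |Irr(G)|` matrix of multiplicities
`m_{πρ} = ⟨π, Res^G_H ρ⟩`.  Then `M Mᵀ = [G : H] · I`: for irreducible `H`-representations
`π, π'`, `∑_{ρ ∈ Irr(G)} ⟨π, Res ρ⟩ ⟨π', Res ρ⟩` equals `[G : H]` if `π ≅ π'` and `0`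
otherwise. -/
theorem resMultiplicity_orthogonality {G : Type} [Group G] [Fintype G]
    (H : Subgroup G) [Fintype H] [H.Normal]
    (hinner : ∀ g : G, ∃ h ∈ H, ∀ x ∈ H, g * x * g⁻¹ = h * x * h⁻¹)
    {ι : Type} [Fintype ι] (ρ : ι → FDRep ℂ G) [∀ i, Simple (ρ i)]
    (hcomplete : ∀ V : FDRep ℂ G, Simple V → ∃! i : ι, Nonempty (V ≅ ρ i))
    (π π' : FDRep ℂ ↥H) [Simple π] [Simple π'] :
    ∑ i : ι, resMultiplicity H π (ρ i) * resMultiplicity H π' (ρ i) =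
      if Nonempty (π ≅ π') then (H.index : ℂ) else 0 :=
  resMultiplicity_orthogonality_general H hinner ρ hcomplete π π'
end

section
/- Let P be the group of primitive elements of a positive self-adjoint Hopf algebra H (i.e., elements x with μ*(x) = x⊗1 + 1⊗x), let I = ⊕_{n>0} H_n be the augmentation ideal, and let I² = μ(I ⊗ I). Then an element x ∈ I is primitive if and only if x is orthogonal to I² with respect to the inner product of H, i.e., P ∩ I = I ∩ (I²)^⊥. -/
open TensorProduct Finsupp

variable (Ω : Type*)

/-- The standard inner product on `H = Ω →₀ ℤ` making the basis `(single ω 1)`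
orthonormal: `⟨x, y⟩ = ∑ ω, x ω * y ω`.  This is the T-group structure of a PSH-algebra
with set of irreducible elements `Ω`. -/
noncomputable def innerF : (Ω →₀ ℤ) →ₗ[ℤ] (Ω →₀ ℤ) →ₗ[ℤ] ℤ :=
  Finsupp.lsum ℤ fun ω => LinearMap.smulRight (LinearMap.id : ℤ →ₗ[ℤ] ℤ) (Finsupp.lapply ω)

/-- The induced pairing of `x ⊗ y` against elements of the tensor square:
`⟨x ⊗ y, ∑ a ⊗ b⟩ = ∑ ⟨x, a⟩ ⟨y, b⟩`. -/
noncomputable def innerT (x y : Ω →₀ ℤ) : (Ω →₀ ℤ) ⊗[ℤ] (Ω →₀ ℤ) →ₗ[ℤ] ℤ :=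
  TensorProduct.lift ((LinearMap.mul ℤ ℤ).compl₁₂ (innerF Ω x) (innerF Ω y))

variable (deg : Ω → ℕ)

/-- The `n`-th graded piece `H_n`: elements supported on irreducibles of degree `n`. -/
noncomputable def gradedPiece (n : ℕ) : Submodule ℤ (Ω →₀ ℤ) :=
  Finsupp.supported ℤ ℤ {ω | deg ω = n}

/-- The "tensor product of submodules" `p ⊗ q` inside `H ⊗ H`, as the range of the map
`p ⊗ q → H ⊗ H`. -/
noncomputable def tensorSub (p q : Submodule ℤ (Ω →₀ ℤ)) :
    Submodule ℤ ((Ω →₀ ℤ) ⊗[ℤ] (Ω →₀ ℤ)) :=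
  LinearMap.range (TensorProduct.map p.subtype q.subtype)

/-!
By self-adjointness, the coefficient of `ω ⊗ ω'` in `μ*(x)` is `⟨ω · ω', x⟩`. When `ω, ω' ≠ ω₀`
both basis elements lie in `I`, and `I²` is spanned by such products, so these coefficients vanish
exactly when `x ⟂ I²`; they also vanish in `x ⊗ 1 + 1 ⊗ x`. The remaining coefficients, those
with `ω = ω₀` or `ω' = ω₀`, are forced by the counit axiom to be the coefficients of `x`, as they
are in `x ⊗ 1 + 1 ⊗ x` because `x ω₀ = 0`.
-/

section Pairing

variable {Ω}

lemma innerF_single_left (ω : Ω) (c : ℤ) (y : Ω →₀ ℤ) :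
    innerF Ω (single ω c) y = c * y ω := by
  simp [innerF, lsum_single]

lemma innerF_comm (a b : Ω →₀ ℤ) : innerF Ω a b = innerF Ω b a := by
  classical
  induction a using Finsupp.induction_linear with
  | zero => simp
  | add f g hf hg => simp only [map_add, LinearMap.add_apply, hf, hg]
  | single ω c =>
    induction b using Finsupp.induction_linear with
    | zero => simp
    | add f g hf hg => simp only [map_add, LinearMap.add_apply, hf, hg]
    | single ω' c' =>
      simp only [innerF_single_left, single_apply, eq_comm (a := ω)]
      split_ifs <;> ring

lemma innerF_single_right (a : Ω →₀ ℤ) (ω : Ω) (c : ℤ) :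
    innerF Ω a (single ω c) = c * a ω := by
  rw [innerF_comm, innerF_single_left]

lemma innerT_tmul (u v a b : Ω →₀ ℤ) :
    innerT Ω u v (a ⊗ₜ[ℤ] b) = innerF Ω u a * innerF Ω v b :=
  TensorProduct.lift.tmul a b

lemma innerT_single_single (ω ω' : Ω) (t : (Ω →₀ ℤ) ⊗[ℤ] (Ω →₀ ℤ)) :
    innerT Ω (single ω 1) (single ω' 1) t = finsuppTensorFinsupp' ℤ Ω Ω t (ω, ω') := by
  induction t with
  | zero => simp
  | tmul a b => simp [innerT_tmul, innerF_single_left, finsuppTensorFinsupp'_apply_apply]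
  | add s t hs ht => simp only [map_add, Finsupp.add_apply, hs, ht]

lemma lid_map_lapply_id_apply (ω₀ ω : Ω) (t : (Ω →₀ ℤ) ⊗[ℤ] (Ω →₀ ℤ)) :
    TensorProduct.lid ℤ (Ω →₀ ℤ) (map (lapply ω₀) LinearMap.id t) ω =
      finsuppTensorFinsupp' ℤ Ω Ω t (ω₀, ω) := by
  induction t with
  | zero => simp
  | tmul a b => simp [finsuppTensorFinsupp'_apply_apply]
  | add s t hs ht => simp only [map_add, Finsupp.add_apply, hs, ht]

lemma rid_map_id_lapply_apply (ω₀ ω : Ω) (t : (Ω →₀ ℤ) ⊗[ℤ] (Ω →₀ ℤ)) :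
    TensorProduct.rid ℤ (Ω →₀ ℤ) (map LinearMap.id (lapply ω₀) t) ω =
      finsuppTensorFinsupp' ℤ Ω Ω t (ω, ω₀) := by
  induction t with
  | zero => simp
  | tmul a b => simp [finsuppTensorFinsupp'_apply_apply, mul_comm]
  | add s t hs ht => simp only [map_add, Finsupp.add_apply, hs, ht]

lemma innerT_tmul_add_tmul_eq_zero {ω₀ : Ω} {u v : Ω →₀ ℤ} (hu : u ω₀ = 0) (hv : v ω₀ = 0)
    (x : Ω →₀ ℤ) :
    innerT Ω u v (x ⊗ₜ[ℤ] single ω₀ 1 + single ω₀ 1 ⊗ₜ[ℤ] x) = 0 := by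
  simp [innerT_tmul, innerF_single_right, hu, hv]

lemma eq_tmul_add_tmul_of_innerT_eq_zero {ω₀ : Ω} {x : Ω →₀ ℤ} (hx : x ω₀ = 0)
    {t : (Ω →₀ ℤ) ⊗[ℤ] (Ω →₀ ℤ)}
    (hl : TensorProduct.lid ℤ (Ω →₀ ℤ) (map (lapply ω₀) LinearMap.id t) = x)
    (hr : TensorProduct.rid ℤ (Ω →₀ ℤ) (map LinearMap.id (lapply ω₀) t) = x)
    (horth : ∀ u v, u ω₀ = 0 → v ω₀ = 0 → innerT Ω u v t = 0) :
    t = x ⊗ₜ[ℤ] single ω₀ 1 + single ω₀ 1 ⊗ₜ[ℤ] x := by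
  classical
  apply (finsuppTensorFinsupp' ℤ Ω Ω).injective
  ext ⟨ω, ω'⟩
  simp only [map_add, Finsupp.add_apply, finsuppTensorFinsupp'_apply_apply, single_apply]
  by_cases hω : ω₀ = ω
  · subst hω
    rw [← lid_map_lapply_id_apply, hl]
    simp [hx]
  by_cases hω' : ω₀ = ω'
  · subst hω'
    rw [← rid_map_id_lapply_apply, hr]
    simp [hω]
  rw [← innerT_single_single, horth _ _ (single_eq_of_ne hω) (single_eq_of_ne hω')]
  simp [hω, hω']

end Pairing

theorem primitive_iff_orthogonal_to_I_squared
    (ω₀ : Ω)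
    (mul : (Ω →₀ ℤ) →ₗ[ℤ] (Ω →₀ ℤ) →ₗ[ℤ] (Ω →₀ ℤ))
    (comul : (Ω →₀ ℤ) →ₗ[ℤ] (Ω →₀ ℤ) ⊗[ℤ] (Ω →₀ ℤ))
    -- the counit axiom, with counit the coefficient of `ω₀`
    (hcounit_l : ∀ x, (TensorProduct.lid ℤ (Ω →₀ ℤ))
        ((TensorProduct.map (Finsupp.lapply ω₀) LinearMap.id) (comul x)) = x)
    (hcounit_r : ∀ x, (TensorProduct.rid ℤ (Ω →₀ ℤ))
        ((TensorProduct.map LinearMap.id (Finsupp.lapply ω₀)) (comul x)) = x)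
    -- self-adjointness: `⟨x · y, z⟩ = ⟨x ⊗ y, μ*(z)⟩`
    (hadj : ∀ x y z, innerF Ω (mul x y) z = innerT Ω x y (comul z))
    -- `x` an element of the augmentation ideal `I`
    (x : Ω →₀ ℤ) (hx : x ω₀ = 0) :
    -- `x` is primitive iff `x ⟂ I²`
    (comul x = x ⊗ₜ[ℤ] Finsupp.single ω₀ 1 + Finsupp.single ω₀ 1 ⊗ₜ[ℤ] x) ↔
      ∀ z ∈ Submodule.span ℤ {z : Ω →₀ ℤ |
          ∃ u, u ω₀ = 0 ∧ ∃ v, v ω₀ = 0 ∧ z = mul u v},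
        innerF Ω x z = 0 := by
  have hpair : ∀ u v, innerF Ω x (mul u v) = innerT Ω u v (comul x) := fun u v ↦ by
    rw [innerF_comm, hadj]
  change _ ↔ Submodule.span ℤ _ ≤ LinearMap.ker (innerF Ω x)
  rw [Submodule.span_le]
  constructor
  · rintro hprim _ ⟨u, hu, v, hv, rfl⟩
    rw [SetLike.mem_coe, LinearMap.mem_ker, hpair, hprim]
    exact innerT_tmul_add_tmul_eq_zero hu hv x
  · refine fun horth ↦ eq_tmul_add_tmul_of_innerT_eq_zero hx (hcounit_l x) (hcounit_r x) ?_
    intro u v hu hv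
    rw [← hpair]
    exact horth ⟨u, hu, v, hv, rfl⟩
end
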